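/- T satisfies the self-similarity relation T = f_{1̲}(f_{0̲}(T)), i.e., T is invariant under applying ∩ 0̲ ∩ 1̲: ((T ∩ 0̲) ∩ 1̲) = T. In closed form: T(2n) = 1, T(4n - 1) = 0, and T(4n - 3) = T(n) for all n ∈ ℤ. -/

import Mathlib

/-- Superposition: `(A ∩ B)(2n) = B n`, `(A ∩ B)(2n-1) = A n`. -/
def cap {α : Type*} (A B : ℤ → α) : ℤ → α :=
  fun v => if v % 2 = 0 then B (v / 2) else A ((v + 1) / 2)

/-- `W m = (0̲ ∩ 1̲)^m` for `m ≥ 1`. -/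
def W : ℕ → ℤ → Fin 2
  | 0 => fun _ => 0
  | 1 => cap (fun _ => 0) (fun _ => 1)
  | (m + 2) => cap (cap (W (m + 1)) (fun _ => 0)) (fun _ => 1)

/-!
Each value `W (m + 2) v` is read off from a single value of `W (m + 1)`, so passing to the
pointwise eventual limit in `W (m + 2) = (W (m + 1) ∩ 0̲) ∩ 1̲` gives `T = (T ∩ 0̲) ∩ 1̲`.
The closed form is this identity evaluated at `2n`, `4n - 1 = 2(2n) - 1` and
`4n - 3 = 2(2n - 1) - 1`.
-/

open Filter

section Cap

variable {α : Type*}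

theorem cap_two_mul (A B : ℤ → α) (n : ℤ) : cap A B (2 * n) = B n := by
  simp [cap]

theorem cap_two_mul_sub_one (A B : ℤ → α) (n : ℤ) : cap A B (2 * n - 1) = A n := by
  simp [cap, Int.sub_emod]

theorem eventually_cap_apply_eq {ι : Type*} {l : Filter ι} {A B : ι → ℤ → α} {A' B' : ℤ → α}
    (hA : ∀ v, ∀ᶠ i in l, A i v = A' v) (hB : ∀ v, ∀ᶠ i in l, B i v = B' v) (v : ℤ) :
    ∀ᶠ i in l, cap (A i) (B i) v = cap A' B' v := by
  unfold cap
  split_ifs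
  exacts [hB _, hA _]

end Cap

theorem cap_cap_eq_of_eventually_W_eq {T : ℤ → Fin 2} (hT : ∀ v, ∀ᶠ m in atTop, W m v = T v) :
    cap (cap T (fun _ => 0)) (fun _ => 1) = T := by
  funext v
  have hconst : ∀ c : Fin 2, ∀ v : ℤ, ∀ᶠ _ : ℕ in atTop, (fun _ : ℤ => c) v = c :=
    fun _ _ => Eventually.of_forall fun _ => rfl
  have hstep : ∀ᶠ m in atTop, W (m + 2) v = cap (cap T (fun _ => 0)) (fun _ => 1) v :=
    eventually_cap_apply_eq (A := fun m => cap (W (m + 1)) fun _ => 0) (B := fun _ _ => 1)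
      (eventually_cap_apply_eq (A := fun m => W (m + 1)) (B := fun _ _ => 0)
        (fun v => (tendsto_add_atTop_nat 1).eventually (hT v)) (hconst 0)) (hconst 1) v
  obtain ⟨m, hcap, hlim⟩ := (hstep.and ((tendsto_add_atTop_nat 2).eventually (hT v))).exists
  exact hcap.symm.trans hlim

/-- `T = (0̲ ∩ 1̲)^∞` satisfies the self-similarity relation `(T ∩ 0̲) ∩ 1̲ = T`; in closed
form `T(2n) = 1`, `T(4n-1) = 0`, `T(4n-3) = T n`. -/
theorem stmt_16 (T : ℤ → Fin 2)
    (hT : ∀ v : ℤ, ∃ M : ℕ, ∀ m : ℕ, M ≤ m → W m v = T v) :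
    cap (cap T (fun _ => 0)) (fun _ => 1) = T ∧
    ∀ n : ℤ, T (2 * n) = 1 ∧ T (4 * n - 1) = 0 ∧ T (4 * n - 3) = T n := by
  have hfix := cap_cap_eq_of_eventually_W_eq fun v => eventually_atTop.2 (hT v)
  refine ⟨hfix, fun n => ⟨?_, ?_, ?_⟩⟩
  · rw [← congrFun hfix, cap_two_mul]
  · rw [← congrFun hfix, show 4 * n - 1 = 2 * (2 * n) - 1 by ring, cap_two_mul_sub_one,
      cap_two_mul]
  · rw [← congrFun hfix, show 4 * n - 3 = 2 * (2 * n - 1) - 1 by ring, cap_two_mul_sub_one,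
      cap_two_mul_sub_one]
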